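/- Let C = Ψ̄_k^{−1}(C_1,…,C_{2^k}), where C_1,…,C_{2^k} are F_{p^r}-linear codes of length n. Then C is a Euclidean self-dual code over B_k if and only if C_1,…,C_{2^k} are all Euclidean self-dual codes over F_{p^r}. -/

import Mathlib

/-!
The primitive idempotents `e_j = ∏ i, (v_i or 1 - v_i)` of `B_k` sum to `1` and satisfy
`q * e_j = Φ_k(q)_j * e_j`, so `Φ_k` is a ring isomorphism `B_k ≃ F_{p^r}^{2^k}` with inverse
`x ↦ ∑ j, x_j e_j`. Transported along it, the Euclidean inner product on `B_k^n` is computed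
coordinatewise and `C` becomes the product code of the `C_i`. The dual of a product code is the
product of the duals, and a product of codes containing `0` determines its factors.
-/

open MvPolynomial

set_option synthInstance.maxHeartbeats 400000
set_option maxHeartbeats 1000000

noncomputable def relIdeal (p r k : ℕ) [Fact p.Prime] : Ideal (MvPolynomial (Fin k) (GaloisField p r)) :=
  Ideal.span (Set.range fun i : Fin k => X i ^ 2 - X i)

abbrev B (p r k : ℕ) [Fact p.Prime] :=
  MvPolynomial (Fin k) (GaloisField p r) ⧸ relIdeal p r k

noncomputable def v (p r k : ℕ) [Fact p.Prime] (i : Fin k) : B p r k :=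
  Ideal.Quotient.mk _ (X i)

lemma v_idem (p r k : ℕ) [Fact p.Prime] (i : Fin k) : v p r k i ^ 2 = v p r k i := by
  have h : (X i ^ 2 - X i : MvPolynomial (Fin k) (GaloisField p r)) ∈ relIdeal p r k :=
    Ideal.subset_span ⟨i, rfl⟩
  have h2 := (Ideal.Quotient.eq_zero_iff_mem).mpr h
  rw [map_sub, map_pow] at h2
  have h3 := sub_eq_zero.mp h2
  simpa [v] using h3

lemma one_sub_v_idem (p r k : ℕ) [Fact p.Prime] (i : Fin k) :
    (1 - v p r k i) ^ 2 = 1 - v p r k i := by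
  have h : (1 - v p r k i) ^ 2 = 1 - 2 * v p r k i + v p r k i ^ 2 := by ring
  rw [h, v_idem]; ring

noncomputable def ThAux (p r k : ℕ) [Fact p.Prime] (S : Finset (Fin k)) :
    MvPolynomial (Fin k) (GaloisField p r) →+* B p r k :=
  (aeval (fun i : Fin k => if i ∈ S then 1 - v p r k i else v p r k i)).toRingHom

lemma ThAux_cond (p r k : ℕ) [Fact p.Prime] (S : Finset (Fin k)) :
    relIdeal p r k ≤ RingHom.ker (ThAux p r k S) := by
  refine Ideal.span_le.mpr ?_
  rintro _ ⟨i, rfl⟩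
  simp only [SetLike.mem_coe, RingHom.mem_ker, ThAux, AlgHom.toRingHom_eq_coe,
    RingHom.coe_coe, map_sub, map_pow, aeval_X]
  by_cases h : i ∈ S
  · rw [if_pos h, one_sub_v_idem, sub_self]
  · rw [if_neg h, v_idem, sub_self]

/-- The automorphism `Θ_S` of `B_k`, determined by `v_i ↦ 1 - v_i` for `i ∈ S` and
`v_i ↦ v_i` otherwise, fixing `F_{p^r}` pointwise. -/
noncomputable def Th (p r k : ℕ) [Fact p.Prime] (S : Finset (Fin k)) :
    B p r k →+* B p r k :=
  Ideal.Quotient.lift (relIdeal p r k) (ThAux p r k S) (fun _ ha => ThAux_cond p r k S ha)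

noncomputable def LamAux (p r k : ℕ) [Fact p.Prime] (π : Equiv.Perm (Fin k)) (t : ℕ) :
    MvPolynomial (Fin k) (GaloisField p r) →+* B p r k :=
  eval₂Hom ((Ideal.Quotient.mk (relIdeal p r k)).comp
      ((C : GaloisField p r →+* MvPolynomial (Fin k) (GaloisField p r)).comp
        (iterateFrobenius (GaloisField p r) p t)))
    (fun i => v p r k (π i))

lemma LamAux_cond (p r k : ℕ) [Fact p.Prime] (π : Equiv.Perm (Fin k)) (t : ℕ) :
    relIdeal p r k ≤ RingHom.ker (LamAux p r k π t) := by
  refine Ideal.span_le.mpr ?_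
  rintro _ ⟨i, rfl⟩
  simp only [SetLike.mem_coe, RingHom.mem_ker, LamAux, map_sub, map_pow, eval₂Hom_X']
  rw [v_idem, sub_self]

/-- The automorphism `Λ_{π,t}` of `B_k`, acting on `F_{p^r}` as the Frobenius power
`α ↦ α^{p^t}` and sending `v_i ↦ v_{π(i)}`. -/
noncomputable def Lam (p r k : ℕ) [Fact p.Prime] (π : Equiv.Perm (Fin k)) (t : ℕ) :
    B p r k →+* B p r k :=
  Ideal.Quotient.lift (relIdeal p r k) (LamAux p r k π t) (fun _ ha => LamAux_cond p r k π t ha)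

noncomputable def PhiAux (p r k : ℕ) [Fact p.Prime] :
    MvPolynomial (Fin k) (GaloisField p r) →+* (Fin (2 ^ k) → GaloisField p r) :=
  Pi.ringHom fun j =>
    eval₂Hom (RingHom.id (GaloisField p r))
      (fun i : Fin k => if Nat.testBit (j : ℕ) (i : ℕ) then 1 else 0)

lemma PhiAux_cond (p r k : ℕ) [Fact p.Prime] :
    relIdeal p r k ≤ RingHom.ker (PhiAux p r k) := by
  refine Ideal.span_le.mpr ?_
  rintro _ ⟨i, rfl⟩
  simp only [SetLike.mem_coe, RingHom.mem_ker, PhiAux]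
  funext j
  simp only [Pi.ringHom, RingHom.pi_apply, map_sub, map_pow, eval₂Hom_X']
  by_cases h : Nat.testBit (j : ℕ) (i : ℕ) <;> simp [h]

/-- The Gray map `Φ_k : B_k → F_{p^r}^{2^k}`: the coordinate indexed by `j` is the
evaluation of (a representative of) an element of `B_k` at the point whose `i`-th
coordinate is the `i`-th binary digit of `j`.  This agrees with the recursive
definition `Φ_k(α + β v_k) = (Φ_{k-1}(α), Φ_{k-1}(α + β))`, `Φ_0 = id`. -/
noncomputable def Phi (p r k : ℕ) [Fact p.Prime] :
    B p r k →+* (Fin (2 ^ k) → GaloisField p r) :=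
  Ideal.Quotient.lift (relIdeal p r k) (PhiAux p r k) (fun _ ha => PhiAux_cond p r k ha)

section EuclideanDual

variable {R S K ι m : Type*}

def euclideanDual [CommSemiring R] [Fintype m] (C : Set (m → R)) : Set (m → R) :=
  {b | ∀ c ∈ C, b ⬝ᵥ c = 0}

lemma zero_mem_euclideanDual [CommSemiring R] [Fintype m] (C : Set (m → R)) :
    0 ∈ euclideanDual C :=
  fun c _ => zero_dotProduct c

def productCode (D : ι → Set (m → K)) : Set (m → ι → K) :=
  {a | ∀ i, (fun j => a j i) ∈ D i}

lemma euclideanDual_preimage_ringEquiv [CommSemiring R] [CommSemiring S] [Fintype m]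
    (φ : R ≃+* S) (C : Set (m → S)) :
    euclideanDual ((φ ∘ ·) ⁻¹' C) = (φ ∘ ·) ⁻¹' euclideanDual C := by
  have hφ (b c : m → R) : φ (b ⬝ᵥ c) = φ ∘ b ⬝ᵥ φ ∘ c :=
    RingHom.map_dotProduct (φ : R →+* S) b c
  ext b
  constructor
  · intro hb c hc
    have hc' : φ ∘ (φ.symm ∘ c) = c := by ext; simp
    rw [← hc', ← hφ, hb _ (by rwa [Set.mem_preimage, hc']), map_zero]
  · intro hb c hc
    rw [← map_eq_zero_iff φ φ.injective, hφ]
    exact hb _ hc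

variable [DecidableEq ι]

lemma single_mem_productCode [Zero K] {D : ι → Set (m → K)} (hD : ∀ i, 0 ∈ D i) {i : ι}
    {c : m → K} (hc : c ∈ D i) : (fun j => Pi.single i (c j)) ∈ productCode D := by
  intro i'
  by_cases h : i' = i
  · subst h; simpa
  · convert hD i' using 1; ext j; simp [h]

lemma subset_of_productCode_subset [Zero K] {D D' : ι → Set (m → K)} (hD : ∀ i, 0 ∈ D i)
    (h : productCode D ⊆ productCode D') (i : ι) : D i ⊆ D' i := fun c hc => by
  simpa using h (single_mem_productCode hD hc) i

lemma productCode_inj [Zero K] {D D' : ι → Set (m → K)} (hD : ∀ i, 0 ∈ D i)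
    (hD' : ∀ i, 0 ∈ D' i) : productCode D = productCode D' ↔ D = D' :=
  ⟨fun h => funext fun i => (subset_of_productCode_subset hD h.subset i).antisymm
    (subset_of_productCode_subset hD' h.symm.subset i), congrArg productCode⟩

lemma euclideanDual_productCode [CommSemiring K] [Fintype m] {D : ι → Set (m → K)}
    (hD : ∀ i, 0 ∈ D i) :
    euclideanDual (productCode D) = productCode fun i => euclideanDual (D i) := by
  ext a
  constructor
  · intro ha i c hc
    simpa [dotProduct, Finset.sum_apply] using congr_fun (ha _ (single_mem_productCode hD hc)) i
  · intro ha c hc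
    ext i
    simpa [dotProduct, Finset.sum_apply] using ha i _ (hc i)

theorem preimage_productCode_eq_euclideanDual_iff [CommSemiring R] [CommSemiring K] [Fintype m]
    (φ : R ≃+* (ι → K)) {D : ι → Set (m → K)} (hD : ∀ i, 0 ∈ D i) :
    (φ ∘ ·) ⁻¹' productCode D = euclideanDual ((φ ∘ ·) ⁻¹' productCode D) ↔
      ∀ i, D i = euclideanDual (D i) := by
  rw [euclideanDual_preimage_ringEquiv, euclideanDual_productCode hD,
    (Set.preimage_injective.mpr φ.surjective.comp_left).eq_iff,
    productCode_inj hD fun i => zero_mem_euclideanDual _, funext_iff]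

end EuclideanDual

section GrayMap

variable (p r k : ℕ) [Fact p.Prime]

local notation "F" => GaloisField p r

lemma testBit_injective :
    Function.Injective fun (j : Fin (2 ^ k)) (i : Fin k) => (j : ℕ).testBit (i : ℕ) := by
  intro j j' h
  refine Fin.ext (Nat.eq_of_testBit_eq fun i => ?_)
  by_cases hi : i < k
  · exact congr_fun h ⟨i, hi⟩
  · have hk : 2 ^ k ≤ 2 ^ i := Nat.pow_le_pow_right two_pos (not_lt.mp hi)
    rw [Nat.testBit_eq_false_of_lt (j.isLt.trans_le hk),
      Nat.testBit_eq_false_of_lt (j'.isLt.trans_le hk)]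

lemma testBit_bijective :
    Function.Bijective fun (j : Fin (2 ^ k)) (i : Fin k) => (j : ℕ).testBit (i : ℕ) :=
  (Fintype.bijective_iff_injective_and_card _).mpr ⟨testBit_injective k, by simp⟩

lemma Phi_algebraMap (a : F) (j : Fin (2 ^ k)) : Phi p r k (algebraMap F (B p r k) a) j = a :=
  eval_C a

lemma Phi_v (i : Fin k) (j : Fin (2 ^ k)) :
    Phi p r k (v p r k i) j = if (j : ℕ).testBit (i : ℕ) then 1 else 0 :=
  eval_X _

noncomputable def vOrOneSub (b : Bool) (i : Fin k) : B p r k :=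
  if b then v p r k i else 1 - v p r k i

lemma Phi_vOrOneSub (b : Bool) (i : Fin k) (j : Fin (2 ^ k)) :
    Phi p r k (vOrOneSub p r k b i) j = if b = (j : ℕ).testBit (i : ℕ) then 1 else 0 := by
  cases b <;> cases h : (j : ℕ).testBit (i : ℕ) <;> simp [vOrOneSub, Phi_v, h]

lemma v_mul_vOrOneSub (b : Bool) (i : Fin k) :
    v p r k i * vOrOneSub p r k b i =
      algebraMap F _ (if b then 1 else 0) * vOrOneSub p r k b i := by
  have hv : v p r k i * v p r k i = v p r k i := by rw [← sq, v_idem]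
  cases b <;> simp [vOrOneSub, mul_sub, hv]

noncomputable def primitiveIdempotent (j : Fin (2 ^ k)) : B p r k :=
  ∏ i : Fin k, vOrOneSub p r k ((j : ℕ).testBit (i : ℕ)) i

lemma Phi_primitiveIdempotent (j j' : Fin (2 ^ k)) :
    Phi p r k (primitiveIdempotent p r k j) j' = if j = j' then 1 else 0 := by
  rw [primitiveIdempotent, map_prod, Finset.prod_apply]
  simp only [Phi_vOrOneSub, Fintype.prod_boole]
  congr 1
  exact propext ⟨fun h => testBit_injective k (funext h), fun h _ => h ▸ rfl⟩

lemma sum_primitiveIdempotent : ∑ j, primitiveIdempotent p r k j = 1 := by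
  classical
  calc ∑ j, primitiveIdempotent p r k j
      = ∑ s : Fin k → Bool, ∏ i, vOrOneSub p r k (s i) i :=
        Fintype.sum_bijective _ (testBit_bijective k) _ _ fun _ => rfl
    _ = ∏ i, ∑ b, vOrOneSub p r k b i := (Fintype.prod_sum fun i b => vOrOneSub p r k b i).symm
    _ = 1 := Fintype.prod_eq_one _ fun i => by simp [vOrOneSub]

lemma v_mul_primitiveIdempotent (i : Fin k) (j : Fin (2 ^ k)) :
    v p r k i * primitiveIdempotent p r k j =
      algebraMap F _ (Phi p r k (v p r k i) j) * primitiveIdempotent p r k j := by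
  rw [primitiveIdempotent, ← Finset.mul_prod_erase _ _ (Finset.mem_univ i), ← mul_assoc,
    v_mul_vOrOneSub, Phi_v, mul_assoc]

lemma mul_primitiveIdempotent (q : B p r k) (j : Fin (2 ^ k)) :
    q * primitiveIdempotent p r k j =
      algebraMap F _ (Phi p r k q j) * primitiveIdempotent p r k j := by
  obtain ⟨f, rfl⟩ := Ideal.Quotient.mk_surjective q
  induction f using MvPolynomial.induction_on with
  | C a => rw [← MvPolynomial.algebraMap_eq, Ideal.Quotient.mk_algebraMap, Phi_algebraMap]
  | add f g hf hg => rw [map_add, add_mul, hf, hg, map_add, Pi.add_apply, map_add, add_mul]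
  | mul_X f i hf =>
    rw [map_mul, mul_assoc, ← v, v_mul_primitiveIdempotent, mul_left_comm, hf, ← mul_assoc,
      ← map_mul, map_mul (Phi p r k), Pi.mul_apply, mul_comm (Phi p r k (v p r k i) j)]

noncomputable def PhiInv (x : Fin (2 ^ k) → F) : B p r k :=
  ∑ j, algebraMap F _ (x j) * primitiveIdempotent p r k j

lemma PhiInv_Phi (q : B p r k) : PhiInv p r k (Phi p r k q) = q := by
  simp only [PhiInv, ← mul_primitiveIdempotent, ← Finset.mul_sum, sum_primitiveIdempotent,
    mul_one]

lemma Phi_PhiInv (x : Fin (2 ^ k) → F) : Phi p r k (PhiInv p r k x) = x := by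
  ext j'
  simp [PhiInv, Phi_algebraMap, Phi_primitiveIdempotent]

lemma Phi_bijective : Function.Bijective (Phi p r k) :=
  Function.bijective_iff_has_inverse.mpr ⟨_, PhiInv_Phi p r k, Phi_PhiInv p r k⟩

end GrayMap

theorem stmt_17_general (p r k n : ℕ) [Fact p.Prime]
    (D : Fin (2 ^ k) → Submodule (GaloisField p r) (Fin n → GaloisField p r)) :
    {a : Fin n → B p r k | ∀ i : Fin (2 ^ k), (fun b => Phi p r k (a b) i) ∈ D i} =
        {b : Fin n → B p r k |
          ∀ c : Fin n → B p r k,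
            (∀ i : Fin (2 ^ k), (fun m => Phi p r k (c m) i) ∈ D i) →
            ∑ j, b j * c j = 0} ↔
      ∀ i : Fin (2 ^ k),
        (D i : Set (Fin n → GaloisField p r)) =
          {b | ∀ c ∈ D i, ∑ j, b j * c j = 0} :=
  preimage_productCode_eq_euclideanDual_iff (RingEquiv.ofBijective _ (Phi_bijective p r k))
    fun i => (D i).zero_mem

/-- Let `C = Ψ̄_k^{-1}(C_1, …, C_{2^k})` with each `C_i` an `F_{p^r}`-linear code of
length `n`.  Then `C` is Euclidean self-dual over `B_k` iff all the `C_i` are Euclidean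
self-dual over `F_{p^r}`. -/
theorem stmt_17 (p r k n : ℕ) [Fact p.Prime] [NeZero n] (hr : 1 ≤ r)
    (D : Fin (2 ^ k) → Submodule (GaloisField p r) (Fin n → GaloisField p r)) :
    {a : Fin n → B p r k | ∀ i : Fin (2 ^ k), (fun b => Phi p r k (a b) i) ∈ D i} =
        {b : Fin n → B p r k |
          ∀ c : Fin n → B p r k,
            (∀ i : Fin (2 ^ k), (fun m => Phi p r k (c m) i) ∈ D i) →
            ∑ j, b j * c j = 0} ↔
      ∀ i : Fin (2 ^ k),
        (D i : Set (Fin n → GaloisField p r)) =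
          {b | ∀ c ∈ D i, ∑ j, b j * c j = 0} :=
  stmt_17_general p r k n D
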